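/- Let A ∈ ℝ^{n×n} be SPD, M ∈ ℝ^{n×n} nonsingular with M + Mᵀ − A SPD, and P ∈ ℝ^{n×n_c} of full column rank. With M̃ := Mᵀ(M+Mᵀ−A)^{-1}M, Π_M̃ := P(PᵀM̃P)^{-1}PᵀM̃, and K_TG := max_{v≠0} ‖(I−Π_M̃)v‖²_M̃ / ‖v‖²_A, the largest eigenvalue of (A^{-1}M̃ − I)(I − Π_M̃) equals K_TG − 1. -/

import Mathlib

/-!
Write `B = I - Π_M̃`. It is an `M̃`-self-adjoint projection, so `‖B v‖²_M̃ = ⟨M̃ B v, v⟩` and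
`K = K_TG` is the least constant with `M̃ B ≤ K A` as quadratic forms. Hence a maximiser `v₀`
satisfies `M̃ B v₀ = K A v₀`, and `x = K v₀ - B v₀` has `B x = (K - 1) B v₀`, so that
`E x = (K - 1) x` for `E = (A⁻¹ M̃ - I) B` (if `x = 0`, then `K` is an eigenvalue of the
projection `B`, so `K = 1` and `E v₀ = 0`).

Conversely, if `E v = μ v`, put `w = B v` and `u = w + μ v`. Then `A u = M̃ w` and
`B u = (1 + μ) w`, so `‖u‖²_A = (1 + μ) ‖w‖²_M̃` while `‖B u‖²_M̃ = (1 + μ)² ‖w‖²_M̃`, and the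
Rayleigh bound at `u` gives `1 + μ ≤ K`. The degenerate cases (`w = 0`, where `μ = 0`, and
`1 + μ ≤ 0`) are covered by `K ≥ 1`, which holds because
`M̃ - A = (Mᵀ - A)ᵀ (M + Mᵀ - A)⁻¹ (Mᵀ - A) ⪰ 0` and, as `n_c < n`, some `v ≠ 0` has `Π v = 0`.
-/

open Matrix

/-- Energy norm induced by a matrix `G`: `‖v‖_G = ⟨G v, v⟩^{1/2}`. -/
noncomputable def enorm {m : Type*} [Fintype m] (G : Matrix m m ℝ) (v : m → ℝ) : ℝ :=
  Real.sqrt (v ⬝ᵥ (G *ᵥ v))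

theorem Matrix.mem_spectrum_iff_exists_mulVec_eq_smul {K ι : Type*} [Field K] [Fintype ι]
    [DecidableEq ι] (E : Matrix ι ι K) (μ : K) :
    μ ∈ spectrum K E ↔ ∃ v ≠ 0, E *ᵥ v = μ • v := by
  rw [spectrum.mem_iff, isUnit_iff_isUnit_det, isUnit_iff_ne_zero, not_not,
    ← exists_mulVec_eq_zero_iff]
  simp only [Algebra.algebraMap_eq_smul_one, sub_mulVec, smul_mulVec, one_mulVec,
    sub_eq_zero, eq_comm]

theorem Matrix.exists_mulVec_eq_zero_of_card_lt {K ι κ : Type*} [Field K] [Fintype ι]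
    [Fintype κ] {Q : Matrix κ ι K} (h : Fintype.card κ < Fintype.card ι) :
    ∃ v ≠ 0, Q *ᵥ v = 0 := by
  obtain ⟨v, hv, hv0⟩ := (Submodule.ne_bot_iff _).mp
    (LinearMap.ker_ne_bot_of_finrank_lt (f := Q.mulVecLin) (by simpa using h))
  exact ⟨v, hv0, hv⟩

theorem Matrix.mulVec_injective_of_rank_eq_card {K ι κ : Type*} [Field K] [Fintype κ]
    {P : Matrix ι κ K} (hP : P.rank = Fintype.card κ) : Function.Injective P.mulVec := by
  rw [mulVec_injective_iff, linearIndependent_iff_card_eq_finrank_span, ← hP,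
    rank_eq_finrank_span_cols]
  rfl

theorem Matrix.IsHermitian.isSymm {ι α : Type*} [Star α] [TrivialStar α] {A : Matrix ι ι α}
    (hA : A.IsHermitian) : A.IsSymm :=
  (conjTranspose_eq_transpose_of_trivial A).symm.trans hA

section

variable {ι : Type*} [Fintype ι]

lemma enorm_sq_of_posSemidef {G : Matrix ι ι ℝ} (hG : G.PosSemidef) (v : ι → ℝ) :
    _root_.enorm G v ^ 2 = v ⬝ᵥ G *ᵥ v :=
  Real.sq_sqrt (by simpa using hG.dotProduct_mulVec_nonneg v)

variable [DecidableEq ι]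

lemma posDef_transpose_mul_inv_mul {W M : Matrix ι ι ℝ} (hW : W.PosDef) (hM : IsUnit M.det) :
    (Mᵀ * W⁻¹ * M).PosDef := by
  simpa using hW.inv.conjTranspose_mul_mul_same
    (mulVec_injective_iff_isUnit.mpr ((isUnit_iff_isUnit_det M).mpr hM))

lemma posSemidef_transpose_mul_inv_mul_sub {A M : Matrix ι ι ℝ} (hW : (M + Mᵀ - A).PosDef) :
    (Mᵀ * (M + Mᵀ - A)⁻¹ * M - A).PosSemidef := by
  obtain ⟨W, rfl⟩ : ∃ W, A = M + Mᵀ - W := ⟨M + Mᵀ - A, by abel⟩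
  rw [sub_sub_cancel] at hW ⊢
  have hWdet : IsUnit W.det := (isUnit_iff_isUnit_det W).mp hW.isUnit
  have hsq : (W - M)ᵀ * W⁻¹ * (W - M) = Mᵀ * W⁻¹ * M - (M + Mᵀ - W) := by
    rw [transpose_sub, hW.isHermitian.isSymm.eq, sub_mul, sub_mul, mul_nonsing_inv _ hWdet,
      one_mul, mul_sub, Matrix.mul_assoc Mᵀ, nonsing_inv_mul _ hWdet, mul_one]
    abel
  have := hW.inv.posSemidef.conjTranspose_mul_mul_same (W - M)
  rwa [conjTranspose_eq_transpose_of_trivial, hsq] at this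

end

section Projection

variable {ι κ : Type*} [Fintype ι] [Fintype κ] [DecidableEq κ] {G : Matrix ι ι ℝ}
  {P : Matrix ι κ ℝ}

lemma isIdempotentElem_proj (hG : G.PosDef) (hP : Function.Injective P.mulVec) :
    IsIdempotentElem (P * (Pᵀ * G * P)⁻¹ * Pᵀ * G) := by
  have hPGP : IsUnit (Pᵀ * G * P).det := by
    simpa [isUnit_iff_isUnit_det] using (hG.conjTranspose_mul_mul_same hP).isUnit
  calc P * (Pᵀ * G * P)⁻¹ * Pᵀ * G * (P * (Pᵀ * G * P)⁻¹ * Pᵀ * G)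
      = P * (Pᵀ * G * P)⁻¹ * (Pᵀ * G * P) * (Pᵀ * G * P)⁻¹ * Pᵀ * G := by
        simp only [Matrix.mul_assoc]
    _ = P * (Pᵀ * G * P)⁻¹ * Pᵀ * G := by rw [nonsing_inv_mul_cancel_right _ _ hPGP]

lemma transpose_proj_mul (hG : G.IsSymm) :
    (P * (Pᵀ * G * P)⁻¹ * Pᵀ * G)ᵀ * G = G * (P * (Pᵀ * G * P)⁻¹ * Pᵀ * G) := by
  simp only [transpose_mul, transpose_transpose, transpose_nonsing_inv, hG.eq, Matrix.mul_assoc]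

lemma proj_mulVec_eq_zero {v : ι → ℝ} (hv : (Pᵀ * G) *ᵥ v = 0) :
    (P * (Pᵀ * G * P)⁻¹ * Pᵀ * G) *ᵥ v = 0 := by
  rw [Matrix.mul_assoc _ Pᵀ G, ← mulVec_mulVec, hv, mulVec_zero]

end Projection

section Rayleigh

variable {ι : Type*} [Fintype ι] {A G B : Matrix ι ι ℝ} {K : ℝ}

def rayleighQuotients (A G B : Matrix ι ι ℝ) : Set ℝ :=
  {r | ∃ v : ι → ℝ, v ≠ 0 ∧ r = (B *ᵥ v) ⬝ᵥ G *ᵥ (B *ᵥ v) / (v ⬝ᵥ A *ᵥ v)}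

lemma dotProduct_mulVec_le_of_mem_upperBounds (hA : A.PosDef)
    (hK : K ∈ upperBounds (rayleighQuotients A G B)) (v : ι → ℝ) :
    (B *ᵥ v) ⬝ᵥ G *ᵥ (B *ᵥ v) ≤ K * (v ⬝ᵥ A *ᵥ v) := by
  rcases eq_or_ne v 0 with rfl | hv
  · simp
  · have hvA : 0 < v ⬝ᵥ A *ᵥ v := by simpa using hA.dotProduct_mulVec_pos hv
    exact (div_le_iff₀ hvA).mp (hK ⟨v, hv, rfl⟩)

lemma one_le_of_mem_upperBounds (hA : A.PosDef) (hGA : (G - A).PosSemidef)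
    (hK : K ∈ upperBounds (rayleighQuotients A G B)) {v : ι → ℝ} (hv : v ≠ 0)
    (hBv : B *ᵥ v = v) : 1 ≤ K := by
  have hvA : 0 < v ⬝ᵥ A *ᵥ v := by simpa using hA.dotProduct_mulVec_pos hv
  have hAG : v ⬝ᵥ A *ᵥ v ≤ v ⬝ᵥ G *ᵥ v := by
    simpa [sub_mulVec] using hGA.dotProduct_mulVec_nonneg v
  have hbound := dotProduct_mulVec_le_of_mem_upperBounds hA hK v
  rw [hBv] at hbound
  nlinarith

lemma exists_mulVec_eq_smul_of_isGreatest (hA : A.PosDef) (hG : G.IsSymm)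
    (hB : IsIdempotentElem B) (hBG : Bᵀ * G = G * B)
    (hK : IsGreatest (rayleighQuotients A G B) K) :
    ∃ v ≠ 0, G *ᵥ (B *ᵥ v) = K • A *ᵥ v := by
  obtain ⟨v, hv, hKv⟩ := hK.1
  have hvA : 0 < v ⬝ᵥ A *ᵥ v := by simpa using hA.dotProduct_mulVec_pos hv
  have hGB : ∀ x, x ⬝ᵥ (G * B) *ᵥ x = (B *ᵥ x) ⬝ᵥ G *ᵥ (B *ᵥ x) := fun x => by
    rw [show G * B = Bᵀ * G * B by rw [hBG, Matrix.mul_assoc, hB.eq], ← mulVec_mulVec,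
      ← mulVec_mulVec, dotProduct_mulVec, vecMul_transpose]
  have hQ : (K • A - G * B).PosSemidef := by
    refine .of_dotProduct_mulVec_nonneg ?_ fun x => ?_
    · rw [IsHermitian, conjTranspose_eq_transpose_of_trivial, transpose_sub, transpose_smul,
        transpose_mul, hA.isHermitian.isSymm.eq, hG.eq, hBG]
    · simpa [sub_mulVec, smul_mulVec, hGB] using
        sub_nonneg.mpr (dotProduct_mulVec_le_of_mem_upperBounds hA hK.2 x)
  have hQv : v ⬝ᵥ (K • A - G * B) *ᵥ v = 0 := by
    rw [sub_mulVec, dotProduct_sub, hGB, smul_mulVec, dotProduct_smul, smul_eq_mul, hKv,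
      div_mul_cancel₀ _ hvA.ne', sub_self]
  refine ⟨v, hv, ?_⟩
  simpa [sub_mulVec, smul_mulVec, sub_eq_zero, eq_comm] using
    (hQ.dotProduct_mulVec_zero_iff v).mp (by simpa using hQv)

variable [DecidableEq ι]

lemma sub_one_mem_spectrum_of_mulVec_eq_smul (hA : IsUnit A.det) (hB : IsIdempotentElem B)
    (hK : K ≠ 0) {v : ι → ℝ} (hv : v ≠ 0) (hGv : G *ᵥ (B *ᵥ v) = K • A *ᵥ v) :
    K - 1 ∈ spectrum ℝ ((A⁻¹ * G - 1) * B) := by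
  set w := B *ᵥ v with hw
  have hBw : B *ᵥ w = w := by rw [hw, mulVec_mulVec, hB.eq]
  have hE : ∀ x, ((A⁻¹ * G - 1) * B) *ᵥ x = A⁻¹ *ᵥ (G *ᵥ (B *ᵥ x)) - B *ᵥ x := fun x => by
    rw [← mulVec_mulVec, sub_mulVec, one_mulVec, ← mulVec_mulVec]
  have hAGw : A⁻¹ *ᵥ (G *ᵥ w) = K • v := by
    rw [hGv, mulVec_smul, mulVec_mulVec, nonsing_inv_mul _ hA, one_mulVec]
  rw [mem_spectrum_iff_exists_mulVec_eq_smul]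
  by_cases hdeg : K • v - w = 0
  · have hKv : K • v = w := sub_eq_zero.mp hdeg
    have hK1 : K = 1 := by
      have hKKv : (K * (K - 1)) • v = 0 := by
        rw [mul_sub_one, sub_smul, mul_smul, hKv, ← mulVec_smul, hKv, hBw, sub_self]
      have hKK := (smul_eq_zero.mp hKKv).resolve_right hv
      exact sub_eq_zero.mp ((mul_eq_zero.mp hKK).resolve_left hK)
    refine ⟨v, hv, ?_⟩
    rw [hE, hAGw, hdeg, hK1, sub_self, zero_smul]
  · refine ⟨K • v - w, hdeg, ?_⟩
    have hBx : B *ᵥ (K • v - w) = (K - 1) • w := by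
      rw [mulVec_sub, mulVec_smul, hBw, sub_smul, one_smul]
    rw [hE, hBx, mulVec_smul, mulVec_smul, hAGw]
    module

lemma le_sub_one_of_mem_spectrum (hA : A.PosDef) (hG : G.PosDef) (hB : IsIdempotentElem B)
    (hBG : Bᵀ * G = G * B) (hK : ∀ v, (B *ᵥ v) ⬝ᵥ G *ᵥ (B *ᵥ v) ≤ K * (v ⬝ᵥ A *ᵥ v))
    (hK1 : 1 ≤ K) {μ : ℝ} (hμ : μ ∈ spectrum ℝ ((A⁻¹ * G - 1) * B)) : μ ≤ K - 1 := by
  obtain ⟨v, hv, hEv⟩ := (mem_spectrum_iff_exists_mulVec_eq_smul _ _).mp hμ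
  set w := B *ᵥ v with hw
  have hBw : B *ᵥ w = w := by rw [hw, mulVec_mulVec, hB.eq]
  set u := w + μ • v with hu
  have hAu : A *ᵥ u = G *ᵥ w := by
    have hAinv : A⁻¹ *ᵥ (G *ᵥ w) = u := by
      rw [hu, ← hEv, ← mulVec_mulVec, sub_mulVec, one_mulVec, ← mulVec_mulVec]
      abel
    rw [← hAinv, mulVec_mulVec, mul_nonsing_inv _ ((isUnit_iff_isUnit_det A).mp hA.isUnit),
      one_mulVec]
  have hBu : B *ᵥ u = (1 + μ) • w := by
    rw [hu, mulVec_add, mulVec_smul, hBw, add_smul, one_smul]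
  rcases eq_or_ne w 0 with hw0 | hw0
  · have : μ • v = 0 := by rw [← hEv, ← mulVec_mulVec, ← hw, hw0, mulVec_zero]
    have := (smul_eq_zero.mp this).resolve_right hv
    linarith
  · have hm : 0 < w ⬝ᵥ G *ᵥ w := by simpa using hG.dotProduct_mulVec_pos hw0
    have huAu : u ⬝ᵥ A *ᵥ u = (1 + μ) * (w ⬝ᵥ G *ᵥ w) :=
      calc u ⬝ᵥ A *ᵥ u = u ⬝ᵥ (Bᵀ * G) *ᵥ w := by rw [hAu, hBG, ← mulVec_mulVec, hBw]
        _ = (B *ᵥ u) ⬝ᵥ G *ᵥ w := by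
          rw [← mulVec_mulVec, dotProduct_mulVec, vecMul_transpose]
        _ = (1 + μ) * (w ⬝ᵥ G *ᵥ w) := by rw [hBu, smul_dotProduct, smul_eq_mul]
    have hKu := hK u
    rw [hBu, huAu, mulVec_smul, dotProduct_smul, smul_dotProduct, smul_eq_mul,
      smul_eq_mul] at hKu
    by_contra! hμK
    nlinarith [mul_pos (by linarith : (0 : ℝ) < 1 + μ - K) (mul_pos (by linarith) hm)]

theorem isGreatest_spectrum_of_isGreatest (hA : A.PosDef) (hG : G.PosDef)
    (hB : IsIdempotentElem B) (hBG : Bᵀ * G = G * B)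
    (hK : IsGreatest (rayleighQuotients A G B) K) (hK1 : 1 ≤ K) :
    IsGreatest (spectrum ℝ ((A⁻¹ * G - 1) * B)) (K - 1) := by
  obtain ⟨v, hv, hGv⟩ := exists_mulVec_eq_smul_of_isGreatest hA hG.isHermitian.isSymm hB hBG hK
  exact ⟨sub_one_mem_spectrum_of_mulVec_eq_smul ((isUnit_iff_isUnit_det A).mp hA.isUnit) hB
      (by positivity) hv hGv,
    fun _ hμ => le_sub_one_of_mem_spectrum hA hG hB hBG
      (dotProduct_mulVec_le_of_mem_upperBounds hA hK.2) hK1 hμ⟩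

end Rayleigh

theorem stmt_5 {n nc : ℕ} (hnc : nc < n)
    (A M : Matrix (Fin n) (Fin n) ℝ)
    (P : Matrix (Fin n) (Fin nc) ℝ)
    (hA : A.PosDef) (hM : IsUnit M.det)
    (hMMA : (M + Mᵀ - A).PosDef)
    (hP : P.rank = nc)
    (Mtil : Matrix (Fin n) (Fin n) ℝ)
    (hMtil : Mtil = Mᵀ * (M + Mᵀ - A)⁻¹ * M)
    (Pi : Matrix (Fin n) (Fin n) ℝ) (hPi : Pi = P * (Pᵀ * Mtil * P)⁻¹ * Pᵀ * Mtil)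
    (KTG : ℝ)
    (hK : IsGreatest {r : ℝ | ∃ v : Fin n → ℝ, v ≠ 0 ∧
        r = (enorm Mtil ((1 - Pi) *ᵥ v)) ^ 2 / (enorm A v) ^ 2} KTG) :
    IsGreatest (spectrum ℝ ((A⁻¹ * Mtil - 1) * (1 - Pi))) (KTG - 1) := by
  have hMt : Mtil.PosDef := hMtil ▸ posDef_transpose_mul_inv_mul hMMA hM
  have hMtA : (Mtil - A).PosSemidef := hMtil ▸ posSemidef_transpose_mul_inv_mul_sub hMMA
  have hPinj : Function.Injective P.mulVec :=
    mulVec_injective_of_rank_eq_card (by rwa [Fintype.card_fin])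
  have hB : IsIdempotentElem (1 - Pi) := hPi ▸ (isIdempotentElem_proj hMt hPinj).one_sub
  have hBG : (1 - Pi)ᵀ * Mtil = Mtil * (1 - Pi) := by
    rw [transpose_sub, transpose_one, sub_mul, mul_sub, one_mul, mul_one, hPi,
      transpose_proj_mul hMt.isHermitian.isSymm]
  simp only [enorm_sq_of_posSemidef hMt.posSemidef, enorm_sq_of_posSemidef hA.posSemidef] at hK
  obtain ⟨v, hv, hPv⟩ := exists_mulVec_eq_zero_of_card_lt (Q := Pᵀ * Mtil) (by simpa using hnc)
  have hBv : (1 - Pi) *ᵥ v = v := by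
    rw [sub_mulVec, one_mulVec, hPi, proj_mulVec_eq_zero hPv, sub_zero]
  exact isGreatest_spectrum_of_isGreatest hA hMt hB hBG hK
    (one_le_of_mem_upperBounds hA hMtA hK.2 hv hBv)
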